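/- arXiv:1906.07336 — 2 statements merged into one kernel-verified Lean document; each statement's English description precedes it below -/
import Mathlib

section
/- Let M and W be real vector spaces, let s : W × W → ℝ be a bilinear map with s(σ, σ) ≥ 0 for all σ ∈ W, let b : M × W → ℝ be bilinear, let ℓ : W → ℝ be linear, and let K ≥ 0 be a real number. Suppose ε ∈ W and e ∈ M satisfy the error equations s(ε, σ) + b(e, σ) = ℓ(σ) for all σ ∈ W and b(v, ε) = 0 for all v ∈ M, and suppose the consistency bound |ℓ(σ)| ≤ K · √(s(σ, σ)) holds for all σ ∈ W. Then s(ε, ε) ≤ K². -/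
/-- Abstract form of the first half of Theorem 8.2: the error equations plus
the consistency bound |ℓ(σ)| ≤ K √(s(σ,σ)) yield s(ε,ε) ≤ K². -/
theorem stmt_3 {M W : Type*} [AddCommGroup M] [Module ℝ M]
    [AddCommGroup W] [Module ℝ W]
    (s : W →ₗ[ℝ] W →ₗ[ℝ] ℝ) (b : M →ₗ[ℝ] W →ₗ[ℝ] ℝ) (ℓ : W →ₗ[ℝ] ℝ)
    (K : ℝ) (hK : 0 ≤ K)
    (hs : ∀ σ : W, 0 ≤ s σ σ)
    (ε : W) (e : M)
    (herr1 : ∀ σ : W, s ε σ + b e σ = ℓ σ)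
    (herr2 : ∀ v : M, b v ε = 0)
    (hcons : ∀ σ : W, |ℓ σ| ≤ K * Real.sqrt (s σ σ)) :
    s ε ε ≤ K ^ 2 := by
  have h1 : s ε ε = ℓ ε := by have := herr1 ε; rw [herr2 e] at this; linarith
  have h2 : s ε ε ≤ K * Real.sqrt (s ε ε) := by
    calc s ε ε = ℓ ε := h1
    _ ≤ |ℓ ε| := le_abs_self _
    _ ≤ K * Real.sqrt (s ε ε) := hcons ε
  have hsq : Real.sqrt (s ε ε) ^ 2 = s ε ε := Real.sq_sqrt (hs ε)
  nlinarith [Real.sqrt_nonneg (s ε ε)]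
end

section
/- Let M and W be real vector spaces, let ‖·‖_M be a seminorm on M, let s : W × W → ℝ be a symmetric bilinear map (s(ρ, σ) = s(σ, ρ)) with s(σ, σ) ≥ 0 for all σ ∈ W, let b : M × W → ℝ be bilinear, let ℓ : W → ℝ be linear, and let C ≥ 0 and K ≥ 0 be real numbers. Assume the constructive inf-sup condition: for every v ∈ M there exists σ_v ∈ W with b(v, σ_v) = ‖v‖_M² and s(σ_v, σ_v) ≤ C² ‖v‖_M². Suppose ε ∈ W and e ∈ M satisfy the error equations s(ε, σ) + b(e, σ) = ℓ(σ) for all σ ∈ W and b(v, ε) = 0 for all v ∈ M, and suppose |ℓ(σ)| ≤ K · √(s(σ, σ)) for all σ ∈ W. Then s(ε, ε) ≤ K² and ‖e‖_M ≤ 2 C K. -/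
/-- Cauchy–Schwarz for a symmetric positive semidefinite bilinear form. -/
lemma cs_aux {W : Type*} [AddCommGroup W] [Module ℝ W]
    (s : W →ₗ[ℝ] W →ₗ[ℝ] ℝ) (hsymm : ∀ ρ σ : W, s ρ σ = s σ ρ)
    (hs : ∀ σ : W, 0 ≤ s σ σ) (ρ σ : W) :
    |s ρ σ| ≤ Real.sqrt (s ρ ρ) * Real.sqrt (s σ σ) := by
  have key : ∀ t : ℝ, 0 ≤ s σ σ * (t * t) + (2 * s ρ σ) * t + s ρ ρ := by
    intro t
    have h := hs (ρ + t • σ)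
    simp only [map_add, map_smul, LinearMap.add_apply, LinearMap.smul_apply,
      smul_eq_mul] at h
    rw [hsymm σ ρ] at h
    ring_nf at h ⊢
    linarith
  have hd : discrim (s σ σ) (2 * s ρ σ) (s ρ ρ) ≤ 0 := by
    rcases eq_or_lt_of_le (hs σ) with h0 | hpos
    · -- s σ σ = 0; then 0 ≤ 2*(sρσ)*t + sρρ for all t forces sρσ = 0
      have hz : s ρ σ = 0 := by
        by_contra hne
        have h1 := key ((-(s ρ ρ) - 1) / (2 * s ρ σ))
        have h2 := key ((-(s ρ ρ) - 1) / (2 * s ρ σ) * 1)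
        have : (2 * s ρ σ) * ((-(s ρ ρ) - 1) / (2 * s ρ σ)) = -(s ρ ρ) - 1 := by
          field_simp
        nlinarith [hs ρ]
      simp [discrim, hz, ← h0]
    · exact discrim_le_zero key
  have h2 : (s ρ σ) ^ 2 ≤ s ρ ρ * s σ σ := by
    unfold discrim at hd; nlinarith
  calc |s ρ σ| ≤ Real.sqrt ((s ρ σ) ^ 2) := by
          rw [Real.sqrt_sq_eq_abs]
       _ ≤ Real.sqrt (s ρ ρ * s σ σ) := Real.sqrt_le_sqrt h2
       _ = Real.sqrt (s ρ ρ) * Real.sqrt (s σ σ) := Real.sqrt_mul (hs ρ) _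

/-- Abstract form of Theorem 8.2: the error equations, the consistency bound,
and the constructive inf-sup condition yield optimal-order estimates for the
dual error in the stabilizer norm and the primal error in the M-seminorm. -/
theorem stmt_4 {M W : Type*} [AddCommGroup M] [Module ℝ M]
    [AddCommGroup W] [Module ℝ W]
    (normM : Seminorm ℝ M)
    (s : W →ₗ[ℝ] W →ₗ[ℝ] ℝ) (b : M →ₗ[ℝ] W →ₗ[ℝ] ℝ) (ℓ : W →ₗ[ℝ] ℝ)
    (C K : ℝ) (hC : 0 ≤ C) (hK : 0 ≤ K)
    (hsymm : ∀ ρ σ : W, s ρ σ = s σ ρ)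
    (hs : ∀ σ : W, 0 ≤ s σ σ)
    (hinfsup : ∀ v : M, ∃ σv : W,
      b v σv = (normM v) ^ 2 ∧ s σv σv ≤ C ^ 2 * (normM v) ^ 2)
    (ε : W) (e : M)
    (herr1 : ∀ σ : W, s ε σ + b e σ = ℓ σ)
    (herr2 : ∀ v : M, b v ε = 0)
    (hcons : ∀ σ : W, |ℓ σ| ≤ K * Real.sqrt (s σ σ)) :
    s ε ε ≤ K ^ 2 ∧ normM e ≤ 2 * C * K := by
  have sqε := Real.sq_sqrt (hs ε)
  have sqnn := Real.sqrt_nonneg (s ε ε)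
  -- first estimate
  have h1 : s ε ε = ℓ ε := by
    have := herr1 ε
    rw [herr2 e] at this
    linarith
  have hroot : Real.sqrt (s ε ε) ≤ K := by
    have hb := hcons ε
    rw [← h1, abs_of_nonneg (hs ε)] at hb
    nlinarith
  have hA : s ε ε ≤ K ^ 2 := by nlinarith
  refine ⟨hA, ?_⟩
  -- second estimate
  obtain ⟨σe, hb1, hb2⟩ := hinfsup e
  have heq := herr1 σe
  rw [hb1] at heq
  have hsq := cs_aux s hsymm hs ε σe
  have hroot2 : Real.sqrt (s σe σe) ≤ C * normM e := by
    have := Real.sqrt_le_sqrt hb2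
    calc Real.sqrt (s σe σe) ≤ Real.sqrt (C ^ 2 * normM e ^ 2) := this
      _ = C * normM e := by
          rw [show C ^ 2 * normM e ^ 2 = (C * normM e) ^ 2 by ring,
            Real.sqrt_sq (by positivity)]
  have hl := hcons σe
  have hs1 : |s ε σe| ≤ K * (C * normM e) := by
    calc |s ε σe| ≤ Real.sqrt (s ε ε) * Real.sqrt (s σe σe) := hsq
      _ ≤ K * (C * normM e) := by
          apply mul_le_mul hroot hroot2 (Real.sqrt_nonneg _) hK
  have hl1 : |ℓ σe| ≤ K * (C * normM e) := by
    calc |ℓ σe| ≤ K * Real.sqrt (s σe σe) := hl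
      _ ≤ K * (C * normM e) := by
          exact mul_le_mul_of_nonneg_left hroot2 hK
  have hbound : normM e ^ 2 ≤ 2 * C * K * normM e := by
    have h3 : normM e ^ 2 = ℓ σe - s ε σe := by linarith
    have := abs_le.mp hs1
    have := abs_le.mp hl1
    nlinarith
  rcases eq_or_lt_of_le (apply_nonneg normM e) with h0 | hpos
  · rw [← h0]; positivity
  · nlinarith
end
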